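/- Define, for real parameters a, m, q, Λ, α and coordinates (r, θ): Ω = 1 − αr·cosθ, ρ = √(r² + a²cos²θ), P = 1 − 2αm·cosθ + (α²(a² + q²) + Λa²/3)cos²θ, Q = ((a² + q²) − 2mr + r²)(1 − α²r²) − (Λ/3)(a² + r²)r², and the complex quantities μ = −√Q·α·cosθ/(√2·ρ) + Ω·√Q·(r − ia·cosθ)/(√2·ρ³), π_NP = (i√P·αr·sinθ)/(√2·ρ) − sinθ·√P·Ω·a·(r − ia·cosθ)/(√2·ρ³), Ψ₂ = (−m(1 − iaα) + q²(1 + αr·cosθ)/(r − ia·cosθ))·(1 − αr·cosθ)³/(r + ia·cosθ)³, Φ₁₁ = (αr·cosθ − 1)⁴·q²/(2(r² + a²cos²θ)²). Let W = 16·Re[(3μΨ₂ + 2μΦ₁₁)²·(−3·conj(π_NP)·conj(Ψ₂) + 2·conj(π_NP)·Φ₁₁)²] − 16·|3μΨ₂ + 2μΦ₁₁|²·|−3π_NP·Ψ₂ + 2π_NP·Φ₁₁|² be the Page–Shoom invariant of the accelerating Kerr–Newman black hole in (anti-)de Sitter spacetime. Then at every point (r, θ) with ρ > 0 and r ± ia·cosθ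 ≠ 0 at which Q(r) = 0 (a stationary horizon), one has √Q = 0, hence μ = 0 and W = 0: the Page–Shoom invariant vanishes at the event and Cauchy horizon radii. -/

import Mathlib

noncomputable section

namespace PageShoom

/-- `Ω = 1 − αr cosθ`. -/
def Ω (α r θ : ℝ) : ℝ := 1 - α * r * Real.cos θ

/-- `ρ = √(r² + a²cos²θ)`. -/
def ρ (a r θ : ℝ) : ℝ := Real.sqrt (r ^ 2 + a ^ 2 * Real.cos θ ^ 2)

/-- `P = 1 − 2αm cosθ + (α²(a² + q²) + Λa²/3)cos²θ`. -/
def P (a m q Λ α θ : ℝ) : ℝ :=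
  1 - 2 * α * m * Real.cos θ + (α ^ 2 * (a ^ 2 + q ^ 2) + Λ * a ^ 2 / 3) * Real.cos θ ^ 2

/-- The metric function `Q = ((a² + q²) − 2mr + r²)(1 − α²r²) − (Λ/3)(a² + r²)r²`,
whose real roots are the stationary horizons. -/
def Q (a m q Λ α r : ℝ) : ℝ :=
  ((a ^ 2 + q ^ 2) - 2 * m * r + r ^ 2) * (1 - α ^ 2 * r ^ 2) -
    Λ / 3 * (a ^ 2 + r ^ 2) * r ^ 2

/-- The Newman–Penrose spin coefficient
`μ = −√Q·α·cosθ/(√2·ρ) + Ω·√Q·(r − ia cosθ)/(√2·ρ³)`. -/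
def μ (a m q Λ α r θ : ℝ) : ℂ :=
  -((Real.sqrt (Q a m q Λ α r) * α * Real.cos θ / (Real.sqrt 2 * ρ a r θ) : ℝ) : ℂ) +
    ((Ω α r θ * Real.sqrt (Q a m q Λ α r) / (Real.sqrt 2 * ρ a r θ ^ 3) : ℝ) : ℂ) *
      ((r : ℂ) - Complex.I * ((a * Real.cos θ : ℝ) : ℂ))

/-- The Newman–Penrose spin coefficient
`π = i√P·αr·sinθ/(√2·ρ) − sinθ·√P·Ω·a·(r − ia cosθ)/(√2·ρ³)`. -/
def πNP (a m q Λ α r θ : ℝ) : ℂ :=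
  Complex.I * ((Real.sqrt (P a m q Λ α θ) * α * r * Real.sin θ /
      (Real.sqrt 2 * ρ a r θ) : ℝ) : ℂ) -
    ((Real.sin θ * Real.sqrt (P a m q Λ α θ) * Ω α r θ * a /
      (Real.sqrt 2 * ρ a r θ ^ 3) : ℝ) : ℂ) *
      ((r : ℂ) - Complex.I * ((a * Real.cos θ : ℝ) : ℂ))

/-- The only nonzero Weyl scalar `Ψ₂` of the accelerating Kerr–Newman–(anti-)de Sitter
black hole. -/
def Ψ2 (a m q α r θ : ℝ) : ℂ :=
  (-(m : ℂ) * (1 - Complex.I * ((a * α : ℝ) : ℂ)) +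
      ((q ^ 2 * (1 + α * r * Real.cos θ) : ℝ) : ℂ) /
        ((r : ℂ) - Complex.I * ((a * Real.cos θ : ℝ) : ℂ))) *
    ((1 - α * r * Real.cos θ : ℝ) : ℂ) ^ 3 /
    ((r : ℂ) + Complex.I * ((a * Real.cos θ : ℝ) : ℂ)) ^ 3

/-- The Ricci–Newman–Penrose scalar `Φ₁₁ = (αr cosθ − 1)⁴ q² / (2(r² + a²cos²θ)²)`. -/
def Φ11 (a q α r θ : ℝ) : ℝ :=
  (α * r * Real.cos θ - 1) ^ 4 * q ^ 2 / (2 * (r ^ 2 + a ^ 2 * Real.cos θ ^ 2) ^ 2)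

/-- The Page–Shoom invariant `W = ‖dΨ₂ ∧ dΨ̄₂‖²` of the accelerating Kerr–Newman black
hole in (anti-)de Sitter spacetime, expressed through the Bianchi identities. -/
def W (a m q Λ α r θ : ℝ) : ℝ :=
  16 * (((3 * μ a m q Λ α r θ * Ψ2 a m q α r θ +
          2 * μ a m q Λ α r θ * ((Φ11 a q α r θ : ℝ) : ℂ)) ^ 2 *
        (-3 * (starRingEnd ℂ) (πNP a m q Λ α r θ) * (starRingEnd ℂ) (Ψ2 a m q α r θ) +
          2 * (starRingEnd ℂ) (πNP a m q Λ α r θ) * ((Φ11 a q α r θ : ℝ) : ℂ)) ^ 2).re) -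
  16 * ‖3 * μ a m q Λ α r θ * Ψ2 a m q α r θ +
        2 * μ a m q Λ α r θ * ((Φ11 a q α r θ : ℝ) : ℂ)‖ ^ 2 *
      ‖-3 * πNP a m q Λ α r θ * Ψ2 a m q α r θ +
        2 * πNP a m q Λ α r θ * ((Φ11 a q α r θ : ℝ) : ℂ)‖ ^ 2

theorem μ_eq_zero_of_sqrt_Q_eq_zero {a m q Λ α r : ℝ} (θ : ℝ)
    (h : Real.sqrt (Q a m q Λ α r) = 0) : μ a m q Λ α r θ = 0 := by
  simp [μ, h]

theorem W_eq_zero_of_μ_eq_zero {a m q Λ α r θ : ℝ} (h : μ a m q Λ α r θ = 0) :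
    W a m q Λ α r θ = 0 := by
  simp [W, h]

theorem W_vanishes_on_horizons_general (a m q Λ α r θ : ℝ)
    (hQ : Q a m q Λ α r = 0) :
    Real.sqrt (Q a m q Λ α r) = 0 ∧ μ a m q Λ α r θ = 0 ∧ W a m q Λ α r θ = 0 := by
  have hsqrt : Real.sqrt (Q a m q Λ α r) = 0 := by rw [hQ, Real.sqrt_zero]
  have hμ := μ_eq_zero_of_sqrt_Q_eq_zero θ hsqrt
  exact ⟨hsqrt, hμ, W_eq_zero_of_μ_eq_zero hμ⟩

/-- At every point `(r, θ)` with `ρ > 0`, `r ± ia cosθ ≠ 0` and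
`Q(r) = 0` (a stationary horizon), one has `√Q = 0`, hence `μ = 0` and `W = 0`:
the Page–Shoom invariant vanishes at the event and Cauchy horizon radii of the
accelerating Kerr–Newman–(anti-)de Sitter black hole. -/
theorem W_vanishes_on_horizons (a m q Λ α r θ : ℝ)
    (hρ : 0 < ρ a r θ)
    (h1 : (r : ℂ) + Complex.I * ((a * Real.cos θ : ℝ) : ℂ) ≠ 0)
    (h2 : (r : ℂ) - Complex.I * ((a * Real.cos θ : ℝ) : ℂ) ≠ 0)
    (hQ : Q a m q Λ α r = 0) :
    Real.sqrt (Q a m q Λ α r) = 0 ∧ μ a m q Λ α r θ = 0 ∧ W a m q Λ α r θ = 0 :=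
  W_vanishes_on_horizons_general a m q Λ α r θ hQ

end PageShoom
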